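/- arXiv:1609.03186 — 3 statements merged into one kernel-verified Lean document; each statement's English description precedes it below -/
import Mathlib

section
/- Fix real numbers y₁, y₂ and s. For t > s set Δ = t−s and define Q₂(x₁, x₂, t | y₁, y₂, s) = (2πΔ · √((Δ²+12)/12))^{−1} · exp{ −((2Δ²+6)/(Δ²+12)) · [ (x₁−y₁)²/Δ − 3(x₁−y₁)(x₂−y₂−y₁Δ)/(Δ²+3) + 3(x₂−y₂−y₁Δ)²/(Δ³+3Δ) ] }. Then for every t > s and all x₁, x₂ ∈ ℝ, the function p(t, x₁, x₂) = Q₂(x₁, x₂, t | y₁, y₂, s) satisfies the Fokker–Planck partial differential equation ∂p/∂t = −x₁ · ∂p/∂x₂ + (1/2) ∂²p/∂x₁² + (1/2) ∂²p/∂x₂². -/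
open Real

/-- The explicit Gaussian transition density `Q₂(x₁, x₂, t | y₁, y₂, s)` of the SDE system
`dX₁ = dB₁`, `dX₂ = X₁ dt + dB₂`, with `Δ = t − s`. -/
noncomputable def Q2 (x₁ x₂ t y₁ y₂ s : ℝ) : ℝ :=
  (2 * Real.pi * (t - s) * Real.sqrt (((t - s) ^ 2 + 12) / 12))⁻¹ *
    Real.exp (-((2 * (t - s) ^ 2 + 6) / ((t - s) ^ 2 + 12)) *
      ((x₁ - y₁) ^ 2 / (t - s)
        - 3 * (x₁ - y₁) * (x₂ - y₂ - y₁ * (t - s)) / ((t - s) ^ 2 + 3)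
        + 3 * (x₂ - y₂ - y₁ * (t - s)) ^ 2 / ((t - s) ^ 3 + 3 * (t - s))))

/-!
In the variables `a = x₁ - y₁`, `u = x₂ - y₂ - y₁ Δ` the factors `Δ² + 3` of the exponent cancel
and `Q₂ = N(Δ) exp (-E)` with `E = ((2Δ² + 6) a² - 6Δ a u + 6 u²) / (Δ (Δ² + 12))`: the Gaussian
with mean `(y₁, y₂ + y₁ Δ)` and covariance `[[Δ, Δ²/2], [Δ²/2, Δ + Δ³/3]]`. Every derivative in the
equation is `Q₂` times a rational function of `Δ, a, u, y₁` (for the second spatial derivatives,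
`(∂E)² - ∂²E`), so after dividing by `Q₂` the equation is an identity of rational functions. The
terms in `y₁`, coming from the drift of `u` in time and from `x₁ = a + y₁` in the transport term,
cancel.
-/

theorem iteratedDeriv_two_const_mul_exp {g g' : ℝ → ℝ} {g'' : ℝ} (c : ℝ) {x : ℝ}
    (hg : ∀ y, HasDerivAt g (g' y) y) (hg' : HasDerivAt g' g'' x) :
    iteratedDeriv 2 (fun y => c * exp (g y)) x = c * exp (g x) * (g' x ^ 2 + g'') := by
  have hderiv : deriv (fun y => c * exp (g y)) = fun y => c * exp (g y) * g' y :=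
    funext fun y => ((hg y).exp.const_mul c).deriv.trans (mul_assoc _ _ _).symm
  rw [iteratedDeriv_succ, iteratedDeriv_one, hderiv]
  exact (((hg x).exp.const_mul c).mul hg').deriv.trans (by ring)

noncomputable def Q2Normalizer (Δ : ℝ) : ℝ :=
  (2 * π * Δ * √((Δ ^ 2 + 12) / 12))⁻¹

noncomputable def Q2Exponent (Δ a u : ℝ) : ℝ :=
  ((2 * Δ ^ 2 + 6) * a ^ 2 - 6 * Δ * a * u + 6 * u ^ 2) / (Δ * (Δ ^ 2 + 12))

theorem Q2_eq {x₁ x₂ t y₁ y₂ s : ℝ} (h : t ≠ s) :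
    Q2 x₁ x₂ t y₁ y₂ s = Q2Normalizer (t - s) *
      exp (-Q2Exponent (t - s) (x₁ - y₁) (x₂ - y₂ - y₁ * (t - s))) := by
  have hΔ : t - s ≠ 0 := sub_ne_zero.2 h
  have hΔ3 : (t - s) ^ 3 + 3 * (t - s) = (t - s) * ((t - s) ^ 2 + 3) := by ring
  unfold Q2 Q2Normalizer Q2Exponent
  rw [hΔ3]
  congr 2
  field_simp
  ring

theorem hasDerivAt_Q2Normalizer {Δ : ℝ} (hΔ : 0 < Δ) :
    HasDerivAt Q2Normalizer (Q2Normalizer Δ * (-(1 / Δ) - Δ / (Δ ^ 2 + 12))) Δ := by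
  have hr : 0 < (Δ ^ 2 + 12) / 12 := by positivity
  have hsqrt := (Real.hasDerivAt_sqrt hr.ne').comp Δ
    (((hasDerivAt_pow 2 Δ).add_const 12).div_const 12)
  have hden : 2 * π * Δ * √((Δ ^ 2 + 12) / 12) ≠ 0 := by positivity
  refine (((hasDerivAt_id Δ).const_mul (2 * π)).mul hsqrt |>.inv hden).congr_deriv ?_
  have hsq : √((Δ ^ 2 + 12) / 12) ^ 2 = (Δ ^ 2 + 12) / 12 := Real.sq_sqrt hr.le
  unfold Q2Normalizer
  simp only [Function.comp_apply, Pi.mul_apply, id]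
  field_simp
  rw [hsq]
  ring

theorem hasDerivAt_Q2Exponent_fst (Δ u a : ℝ) :
    HasDerivAt (fun a => Q2Exponent Δ a u)
      ((2 * (2 * Δ ^ 2 + 6) * a - 6 * Δ * u) / (Δ * (Δ ^ 2 + 12))) a := by
  have h : HasDerivAt (fun a => (2 * Δ ^ 2 + 6) * a ^ 2 - 6 * Δ * a * u + 6 * u ^ 2)
      (2 * (2 * Δ ^ 2 + 6) * a - 6 * Δ * u) a := by
    have := (((hasDerivAt_pow 2 a).const_mul (2 * Δ ^ 2 + 6)).sub
      (((hasDerivAt_id a).const_mul (6 * Δ)).mul_const u)).add_const (6 * u ^ 2)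
    exact this.congr_deriv (by ring)
  exact h.div_const _

theorem hasDerivAt_Q2Exponent_snd (Δ a u : ℝ) :
    HasDerivAt (fun u => Q2Exponent Δ a u) ((12 * u - 6 * Δ * a) / (Δ * (Δ ^ 2 + 12))) u := by
  have h : HasDerivAt (fun u => (2 * Δ ^ 2 + 6) * a ^ 2 - 6 * Δ * a * u + 6 * u ^ 2)
      (12 * u - 6 * Δ * a) u := by
    have := (((hasDerivAt_id u).const_mul (6 * Δ * a)).const_sub ((2 * Δ ^ 2 + 6) * a ^ 2)).add
      ((hasDerivAt_pow 2 u).const_mul 6)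
    exact this.congr_deriv (by ring)
  exact h.div_const _

theorem hasDerivAt_Q2Exponent_drift {Δ : ℝ} (hΔ : Δ ≠ 0) (a c y₁ : ℝ) :
    HasDerivAt (fun δ => Q2Exponent δ a (c - y₁ * δ))
      ((4 * Δ * a ^ 2 - 6 * a * (c - y₁ * Δ) + 6 * Δ * a * y₁ - 12 * (c - y₁ * Δ) * y₁
        - Q2Exponent Δ a (c - y₁ * Δ) * (3 * Δ ^ 2 + 12)) / (Δ * (Δ ^ 2 + 12))) Δ := by
  have hu : HasDerivAt (fun δ => c - y₁ * δ) (-y₁) Δ := by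
    simpa using ((hasDerivAt_id Δ).const_mul y₁).const_sub c
  have hnum := ((((hasDerivAt_pow 2 Δ).const_mul 2).add_const 6).mul_const (a ^ 2)).sub
    ((((hasDerivAt_id Δ).const_mul 6).mul_const a).mul hu) |>.add ((hu.pow 2).const_mul 6)
  have hden := (hasDerivAt_id Δ).mul ((hasDerivAt_pow 2 Δ).add_const 12)
  have hD : Δ * (Δ ^ 2 + 12) ≠ 0 := mul_ne_zero hΔ (by positivity)
  refine (hnum.div hden hD).congr_deriv ?_
  unfold Q2Exponent
  simp only [id, Pi.mul_apply, Pi.add_apply, Pi.sub_apply, Pi.pow_apply]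
  field_simp
  ring

theorem Q2_fokkerPlanck_identity {Δ : ℝ} (hΔ : Δ ≠ 0) (a u y₁ : ℝ) :
    -(1 / Δ) - Δ / (Δ ^ 2 + 12)
        - (4 * Δ * a ^ 2 - 6 * a * u + 6 * Δ * a * y₁ - 12 * u * y₁
          - Q2Exponent Δ a u * (3 * Δ ^ 2 + 12)) / (Δ * (Δ ^ 2 + 12))
      = (a + y₁) * ((12 * u - 6 * Δ * a) / (Δ * (Δ ^ 2 + 12)))
        + 1 / 2 * (((2 * (2 * Δ ^ 2 + 6) * a - 6 * Δ * u) / (Δ * (Δ ^ 2 + 12))) ^ 2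
          - 2 * (2 * Δ ^ 2 + 6) / (Δ * (Δ ^ 2 + 12)))
        + 1 / 2 * (((12 * u - 6 * Δ * a) / (Δ * (Δ ^ 2 + 12))) ^ 2 - 12 / (Δ * (Δ ^ 2 + 12))) := by
  unfold Q2Exponent
  field_simp
  ring

section
variable {x₁ x₂ t y₁ y₂ s : ℝ}

theorem hasDerivAt_Q2_time (ht : s < t) :
    HasDerivAt (fun τ => Q2 x₁ x₂ τ y₁ y₂ s)
      (Q2 x₁ x₂ t y₁ y₂ s * (-(1 / (t - s)) - (t - s) / ((t - s) ^ 2 + 12)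
        - (4 * (t - s) * (x₁ - y₁) ^ 2 - 6 * (x₁ - y₁) * (x₂ - y₂ - y₁ * (t - s))
            + 6 * (t - s) * (x₁ - y₁) * y₁ - 12 * (x₂ - y₂ - y₁ * (t - s)) * y₁
            - Q2Exponent (t - s) (x₁ - y₁) (x₂ - y₂ - y₁ * (t - s)) * (3 * (t - s) ^ 2 + 12))
          / ((t - s) * ((t - s) ^ 2 + 12)))) t := by
  have hΔ : 0 < t - s := sub_pos.2 ht
  have hshift : HasDerivAt (fun τ => τ - s) 1 t := (hasDerivAt_id t).sub_const s
  have hN := (hasDerivAt_Q2Normalizer hΔ).comp t hshift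
  have hE := (hasDerivAt_Q2Exponent_drift hΔ.ne' (x₁ - y₁) (x₂ - y₂) y₁).comp t hshift
  have hQ2 : (fun τ => Q2 x₁ x₂ τ y₁ y₂ s) =ᶠ[nhds t] fun τ => Q2Normalizer (τ - s) *
      exp (-Q2Exponent (τ - s) (x₁ - y₁) (x₂ - y₂ - y₁ * (τ - s))) := by
    filter_upwards [eventually_gt_nhds ht] with τ hτ using Q2_eq hτ.ne'
  refine ((hN.mul hE.neg.exp).congr_of_eventuallyEq hQ2).congr_deriv ?_
  simp only [Function.comp_apply, Pi.neg_apply]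
  rw [Q2_eq ht.ne']
  ring

theorem deriv_Q2_snd (h : t ≠ s) :
    deriv (fun ξ => Q2 x₁ ξ t y₁ y₂ s) x₂ = -(Q2 x₁ x₂ t y₁ y₂ s *
      ((12 * (x₂ - y₂ - y₁ * (t - s)) - 6 * (t - s) * (x₁ - y₁)) / ((t - s) * ((t - s) ^ 2 + 12)))) := by
  have hE : HasDerivAt (fun ξ => Q2Exponent (t - s) (x₁ - y₁) (ξ - y₂ - y₁ * (t - s)))
      ((12 * (x₂ - y₂ - y₁ * (t - s)) - 6 * (t - s) * (x₁ - y₁)) / ((t - s) * ((t - s) ^ 2 + 12)))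
      x₂ :=
    ((hasDerivAt_Q2Exponent_snd _ _ _).comp x₂
      (((hasDerivAt_id x₂).sub_const y₂).sub_const _)).congr_deriv (mul_one _)
  simp_rw [Q2_eq h]
  exact (hE.neg.exp.const_mul _).deriv.trans (by simp only [Pi.neg_apply]; ring)

theorem iteratedDeriv_two_Q2_fst (h : t ≠ s) :
    iteratedDeriv 2 (fun ξ => Q2 ξ x₂ t y₁ y₂ s) x₁ = Q2 x₁ x₂ t y₁ y₂ s *
      (((2 * (2 * (t - s) ^ 2 + 6) * (x₁ - y₁) - 6 * (t - s) * (x₂ - y₂ - y₁ * (t - s)))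
          / ((t - s) * ((t - s) ^ 2 + 12))) ^ 2
        - 2 * (2 * (t - s) ^ 2 + 6) / ((t - s) * ((t - s) ^ 2 + 12))) := by
  have hshift (ξ : ℝ) : HasDerivAt (fun ξ => ξ - y₁) 1 ξ := (hasDerivAt_id ξ).sub_const y₁
  have hg (ξ : ℝ) : HasDerivAt (fun ξ => -Q2Exponent (t - s) (ξ - y₁) (x₂ - y₂ - y₁ * (t - s)))
      (-((2 * (2 * (t - s) ^ 2 + 6) * (ξ - y₁) - 6 * (t - s) * (x₂ - y₂ - y₁ * (t - s)))
          / ((t - s) * ((t - s) ^ 2 + 12)))) ξ :=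
    ((hasDerivAt_Q2Exponent_fst _ _ _).comp ξ (hshift ξ)).neg.congr_deriv (by ring)
  simp_rw [Q2_eq h]
  rw [iteratedDeriv_two_const_mul_exp _ hg
    ((((hshift x₁).const_mul _).sub_const _).div_const _).neg]
  ring

theorem iteratedDeriv_two_Q2_snd (h : t ≠ s) :
    iteratedDeriv 2 (fun ξ => Q2 x₁ ξ t y₁ y₂ s) x₂ = Q2 x₁ x₂ t y₁ y₂ s *
      (((12 * (x₂ - y₂ - y₁ * (t - s)) - 6 * (t - s) * (x₁ - y₁))
          / ((t - s) * ((t - s) ^ 2 + 12))) ^ 2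
        - 12 / ((t - s) * ((t - s) ^ 2 + 12))) := by
  have hshift (ξ : ℝ) : HasDerivAt (fun ξ => ξ - y₂ - y₁ * (t - s)) 1 ξ :=
    ((hasDerivAt_id ξ).sub_const y₂).sub_const _
  have hg (ξ : ℝ) : HasDerivAt (fun ξ => -Q2Exponent (t - s) (x₁ - y₁) (ξ - y₂ - y₁ * (t - s)))
      (-((12 * (ξ - y₂ - y₁ * (t - s)) - 6 * (t - s) * (x₁ - y₁))
          / ((t - s) * ((t - s) ^ 2 + 12)))) ξ :=
    ((hasDerivAt_Q2Exponent_snd _ _ _).comp ξ (hshift ξ)).neg.congr_deriv (by ring)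
  simp_rw [Q2_eq h]
  rw [iteratedDeriv_two_const_mul_exp _ hg
    ((((hshift x₂).const_mul _).sub_const _).div_const _).neg]
  ring

end

/-- For `t > s`, the density `p(t, x₁, x₂) = Q₂(x₁, x₂, t | y₁, y₂, s)` satisfies the
Fokker–Planck equation `∂p/∂t = −x₁ ∂p/∂x₂ + (1/2) ∂²p/∂x₁² + (1/2) ∂²p/∂x₂²`. -/
theorem Q2_satisfies_fokker_planck (y₁ y₂ s : ℝ) (t : ℝ) (ht : s < t) (x₁ x₂ : ℝ) :
    deriv (fun τ => Q2 x₁ x₂ τ y₁ y₂ s) t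
      = -x₁ * deriv (fun ξ => Q2 x₁ ξ t y₁ y₂ s) x₂
        + (1 / 2) * iteratedDeriv 2 (fun ξ => Q2 ξ x₂ t y₁ y₂ s) x₁
        + (1 / 2) * iteratedDeriv 2 (fun ξ => Q2 x₁ ξ t y₁ y₂ s) x₂ := by
  rw [hasDerivAt_Q2_time ht |>.deriv, deriv_Q2_snd ht.ne', iteratedDeriv_two_Q2_fst ht.ne',
    iteratedDeriv_two_Q2_snd ht.ne']
  linear_combination Q2 x₁ x₂ t y₁ y₂ s *
    Q2_fokkerPlanck_identity (sub_pos.2 ht).ne' (x₁ - y₁) (x₂ - y₂ - y₁ * (t - s)) y₁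
end

section
/- Let (Ω, F, μ) be a probability space, let a, b, c be natural numbers, and let X: Ω → ℝ^a, Y: Ω → ℝ^b, Z: Ω → ℝ^c be measurable maps. Suppose the law of the triple (X, Y, Z) on ℝ^a × ℝ^b × ℝ^c is absolutely continuous with respect to Lebesgue measure with density of the product (Markov) form p(x, y, z) = q₁(x, y) · q₂(y, z), where q₁: ℝ^a × ℝ^b → [0, ∞) and q₂: ℝ^b × ℝ^c → [0, ∞) are measurable, q₂ is strictly positive, and r(y) := ∫_{ℝ^c} q₂(y, z) dz satisfies 0 < r(y) < ∞ for every y. Then for every bounded measurable g: ℝ^c → ℝ, the conditional expectation of g(Z) given the σ-algebra generated by (X, Y) is μ-almost surely equal to the function ω ↦ (∫_{ℝ^c} g(z) q₂(Y(ω), z) dz) / r(Y(ω)). In particular E[g(Z) | σ(X, Y)] = E[g(Z) | σ(Y)] almost surely: conditionally on Y, Z is independent of X. -/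
/-!
Write `h(y)` for the average of `g` against the kernel `q₂(y, ·)`. Since `q₂(y, ·)(g - h(y))` has
integral zero for every `y`, Fubini shows that `1_A(x, y) (g(z) - h(y))` integrates to zero against
`q₁(x, y) q₂(y, z)` whatever the set `A` of pairs `(x, y)` is: the factor `q₁(x, y)` only scales
the inner integral over `z`. Transported to `Ω` through the law of `(X, Y, Z)`, this says that
`g(Z)` and `h(Y)` have the same integral over every event of `σ(X, Y)`, hence over every event of
`σ(Y)`, so `h(Y)` is a version of both conditional expectations.
-/

open MeasureTheory Function

section KernelAverage

variable {β γ : Type*} [MeasureSpace γ]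

noncomputable def kernelAverage (q : β → γ → ℝ) (g : γ → ℝ) (y : β) : ℝ :=
  (∫ z, g z * q y z) / ∫ z, q y z

variable {q : β → γ → ℝ} {g : γ → ℝ}

theorem measurable_kernelAverage [MeasurableSpace β] [SFinite (volume : Measure γ)]
    (hq : Measurable (uncurry q)) (hg : Measurable g) : Measurable (kernelAverage q g) :=
  (((hg.comp measurable_snd).mul hq).stronglyMeasurable.integral_prod_right').measurable.div
    (hq.stronglyMeasurable.integral_prod_right').measurable

theorem integral_mul_sub_kernelAverage {y : β} (hgq : Integrable fun z => g z * q y z)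
    (hr : ∫ z, q y z ≠ 0) : ∫ z, q y z * (g z - kernelAverage q g y) = 0 := by
  have hq : Integrable (q y) := Integrable.of_integral_ne_zero hr
  calc ∫ z, q y z * (g z - kernelAverage q g y)
      = (∫ z, g z * q y z) - ∫ z, q y z * kernelAverage q g y := by
        rw [← integral_sub hgq (hq.mul_const _)]
        congr 1 with z
        ring
    _ = 0 := by rw [integral_mul_const, kernelAverage, mul_div_cancel₀ _ hr, sub_self]

theorem abs_kernelAverage_le {y : β} {C : ℝ} (hq : ∀ z, 0 ≤ q y z) (hr : 0 < ∫ z, q y z)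
    (hgC : ∀ z, |g z| ≤ C) : |kernelAverage q g y| ≤ C := by
  have hqi : Integrable (q y) := Integrable.of_integral_ne_zero hr.ne'
  have hI : |∫ z, g z * q y z| ≤ C * ∫ z, q y z := by
    rw [← Real.norm_eq_abs, ← integral_const_mul]
    refine norm_integral_le_of_norm_le (hqi.const_mul C) (ae_of_all _ fun z => ?_)
    rw [Real.norm_eq_abs, abs_mul, abs_of_nonneg (hq z)]
    exact mul_le_mul_of_nonneg_right (hgC z) (hq z)
  rwa [kernelAverage, abs_div, abs_of_pos hr, div_le_iff₀ hr]

end KernelAverage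

section Density

variable {α β γ : Type*} [MeasureSpace α] [MeasureSpace β] [MeasureSpace γ]
  [SFinite (volume : Measure γ)] {q₁ : α → β → ℝ} {q₂ : β → γ → ℝ} {g : γ → ℝ} {C : ℝ}

theorem measurable_sub_kernelAverage (hq₂ : Measurable (uncurry q₂)) (hg : Measurable g) :
    Measurable fun w : α × β × γ => g w.2.2 - kernelAverage q₂ g w.2.1 :=
  (hg.comp measurable_snd.snd).sub ((measurable_kernelAverage hq₂ hg).comp measurable_snd.fst)

variable [SFinite (volume : Measure α)] [SFinite (volume : Measure β)]

theorem integral_eq_zero_of_forall_integral_eq_zero {ψ : α × β × γ → ℝ}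
    (hψ : Integrable ψ) (h0 : ∀ x y, ∫ z, ψ (x, y, z) = 0) : ∫ w, ψ w = 0 := by
  rw [Measure.volume_eq_prod, integral_prod _ hψ]
  refine integral_eq_zero_of_ae ?_
  filter_upwards [hψ.prod_right_ae] with x hx
  rw [Measure.volume_eq_prod, integral_prod _ hx]
  simp [h0]

theorem setIntegral_markovDensity_sub_kernelAverage_eq_zero
    (hq₁ : Measurable (uncurry q₁)) (hq₂ : Measurable (uncurry q₂))
    (hq₂nonneg : ∀ y z, 0 ≤ q₂ y z) (hr : ∀ y, 0 < ∫ z, q₂ y z)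
    (hfin : ∫⁻ w : α × β × γ, ENNReal.ofReal (q₁ w.1 w.2.1 * q₂ w.2.1 w.2.2) ≠ ⊤)
    (hg : Measurable g) (hgC : ∀ z, |g z| ≤ C) {A : Set (α × β)} (hA : MeasurableSet A) :
    ∫ w in (fun w : α × β × γ => (w.1, w.2.1)) ⁻¹' A, g w.2.2 - kernelAverage q₂ g w.2.1
      ∂(volume.withDensity fun w => ENNReal.ofReal (q₁ w.1 w.2.1 * q₂ w.2.1 w.2.2)) = 0 := by
  have hS : MeasurableSet ((fun w : α × β × γ => (w.1, w.2.1)) ⁻¹' A) :=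
    (measurable_fst.prodMk measurable_snd.fst) hA
  have hD : Measurable fun w : α × β × γ => ENNReal.ofReal (q₁ w.1 w.2.1 * q₂ w.2.1 w.2.2) :=
    ((hq₁.comp (measurable_fst.prodMk measurable_snd.fst)).mul
      (hq₂.comp measurable_snd)).ennreal_ofReal
  have hh := measurable_sub_kernelAverage (α := α) hq₂ hg
  have hhC : ∀ w : α × β × γ, ‖g w.2.2 - kernelAverage q₂ g w.2.1‖ ≤ C + C := fun w =>
    (norm_sub_le _ _).trans
      (add_le_add (hgC _) (abs_kernelAverage_le (hq₂nonneg _) (hr _) hgC))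
  rw [setIntegral_withDensity_eq_setIntegral_toReal_smul hD
    (ae_of_all _ fun _ => ENNReal.ofReal_lt_top) _ hS, ← integral_indicator hS]
  refine integral_eq_zero_of_forall_integral_eq_zero
    (((integrable_toReal_of_lintegral_ne_top hD.aemeasurable hfin).mul_bdd
      hh.aestronglyMeasurable (ae_of_all _ hhC)).indicator hS) fun x y => ?_
  by_cases hxy : (x, y) ∈ A
  · have hgq : Integrable fun z => g z * q₂ y z :=
      (Integrable.of_integral_ne_zero (hr y).ne').bdd_mul hg.aestronglyMeasurable
        (ae_of_all _ hgC)
    -- `ofReal` clips the density to its positive part, which factors because `q₂ ≥ 0`.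
    have hfactor : ∀ z, (ENNReal.ofReal (q₁ x y * q₂ y z)).toReal • (g z - kernelAverage q₂ g y)
        = max (q₁ x y) 0 * (q₂ y z * (g z - kernelAverage q₂ g y)) := fun z => by
      rw [ENNReal.toReal_ofReal', smul_eq_mul, ← mul_assoc, max_mul_of_nonneg _ _ (hq₂nonneg y z),
        zero_mul]
    simp only [Set.indicator, Set.mem_preimage, hxy, if_true, hfactor, integral_const_mul,
      integral_mul_sub_kernelAverage hgq (hr y).ne', mul_zero]
  · simp [Set.indicator, hxy]

theorem setIntegral_preimage_eq_setIntegral_kernelAverage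
    {Ω : Type*} [MeasurableSpace Ω] {μ : Measure Ω} [IsFiniteMeasure μ]
    {X : Ω → α} {Y : Ω → β} {Z : Ω → γ} (hXYZ : AEMeasurable (fun ω => (X ω, Y ω, Z ω)) μ)
    (hq₁ : Measurable (uncurry q₁)) (hq₂ : Measurable (uncurry q₂))
    (hq₂nonneg : ∀ y z, 0 ≤ q₂ y z) (hr : ∀ y, 0 < ∫ z, q₂ y z)
    (hlaw : μ.map (fun ω => (X ω, Y ω, Z ω))
      = volume.withDensity fun w => ENNReal.ofReal (q₁ w.1 w.2.1 * q₂ w.2.1 w.2.2))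
    (hg : Measurable g) (hgC : ∀ z, |g z| ≤ C) {A : Set (α × β)} (hA : MeasurableSet A) :
    ∫ ω in (fun ω => (X ω, Y ω)) ⁻¹' A, g (Z ω) ∂μ
      = ∫ ω in (fun ω => (X ω, Y ω)) ⁻¹' A, kernelAverage q₂ g (Y ω) ∂μ := by
  have hfin : ∫⁻ w : α × β × γ, ENNReal.ofReal (q₁ w.1 w.2.1 * q₂ w.2.1 w.2.2) ≠ ⊤ := by
    rw [← setLIntegral_univ, ← withDensity_apply _ MeasurableSet.univ, ← hlaw]
    exact measure_ne_top _ _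
  have hZ : AEMeasurable Z μ := measurable_snd.snd.comp_aemeasurable hXYZ
  have hY : AEMeasurable Y μ := measurable_snd.fst.comp_aemeasurable hXYZ
  have hgZ : Integrable (fun ω => g (Z ω)) μ :=
    .of_bound (hg.comp_aemeasurable hZ).aestronglyMeasurable C (ae_of_all _ fun ω => hgC (Z ω))
  have hhY : Integrable (fun ω => kernelAverage q₂ g (Y ω)) μ :=
    .of_bound ((measurable_kernelAverage hq₂ hg).comp_aemeasurable hY).aestronglyMeasurable C
      (ae_of_all _ fun ω => abs_kernelAverage_le (hq₂nonneg _) (hr _) hgC)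
  have hzero := setIntegral_markovDensity_sub_kernelAverage_eq_zero hq₁ hq₂ hq₂nonneg hr hfin hg
    hgC hA
  rw [← hlaw, setIntegral_map ((measurable_fst.prodMk measurable_snd.fst) hA)
    (measurable_sub_kernelAverage hq₂ hg).aestronglyMeasurable hXYZ,
    integral_sub hgZ.integrableOn hhY.integrableOn] at hzero
  exact sub_eq_zero.mp hzero

end Density

theorem condExp_comap_ae_eq_of_forall_setIntegral_eq {Ω E F : Type*} [MeasurableSpace Ω]
    [MeasurableSpace E] [NormedAddCommGroup F] [NormedSpace ℝ F] [CompleteSpace F]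
    {μ : Measure Ω} [IsFiniteMeasure μ] {W : Ω → E} (hW : Measurable W) {f : Ω → F}
    (hf : Integrable f μ) {φ : E → F} (hφ : StronglyMeasurable φ)
    (hφW : Integrable (fun ω => φ (W ω)) μ)
    (h : ∀ A, MeasurableSet A → ∫ ω in W ⁻¹' A, f ω ∂μ = ∫ ω in W ⁻¹' A, φ (W ω) ∂μ) :
    μ[f | MeasurableSpace.comap W inferInstance] =ᵐ[μ] fun ω => φ (W ω) := by
  refine (ae_eq_condExp_of_forall_setIntegral_eq hW.comap_le hf
    (fun _ _ _ => hφW.integrableOn) ?_ ?_).symm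
  · rintro _ ⟨A, hA, rfl⟩ _
    exact (h A hA).symm
  · exact (hφ.comp_measurable (comap_measurable W)).aestronglyMeasurable

theorem markov_conditional_expectation_general
    {Ω : Type*} [MeasurableSpace Ω] (μ : Measure Ω) [IsProbabilityMeasure μ]
    (a b c : ℕ)
    (X : Ω → (Fin a → ℝ)) (Y : Ω → (Fin b → ℝ)) (Z : Ω → (Fin c → ℝ))
    (hX : Measurable X) (hY : Measurable Y) (hZ : Measurable Z)
    (q₁ : (Fin a → ℝ) → (Fin b → ℝ) → ℝ) (q₂ : (Fin b → ℝ) → (Fin c → ℝ) → ℝ)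
    (hq₁meas : Measurable fun p : (Fin a → ℝ) × (Fin b → ℝ) => q₁ p.1 p.2)
    (hq₂meas : Measurable fun p : (Fin b → ℝ) × (Fin c → ℝ) => q₂ p.1 p.2)
    (hq₂pos : ∀ y z, 0 < q₂ y z)
    (hrpos : ∀ y, 0 < ∫ z, q₂ y z)
    (hlaw : Measure.map (fun ω => (X ω, Y ω, Z ω)) μ
      = volume.withDensity fun w => ENNReal.ofReal (q₁ w.1 w.2.1 * q₂ w.2.1 w.2.2))
    (g : (Fin c → ℝ) → ℝ) (hg : Measurable g) (hgb : ∃ C, ∀ z, |g z| ≤ C) :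
    (μ[(fun ω => g (Z ω)) | MeasurableSpace.comap (fun ω => (X ω, Y ω)) inferInstance]
        =ᵐ[μ] fun ω => (∫ z, g z * q₂ (Y ω) z) / ∫ z, q₂ (Y ω) z)
      ∧ μ[(fun ω => g (Z ω)) | MeasurableSpace.comap (fun ω => (X ω, Y ω)) inferInstance]
        =ᵐ[μ] μ[(fun ω => g (Z ω)) | MeasurableSpace.comap Y inferInstance] := by
  obtain ⟨C, hgC⟩ := hgb
  have hq₂nonneg : ∀ y z, 0 ≤ q₂ y z := fun y z => (hq₂pos y z).le
  have havg : Measurable (kernelAverage q₂ g) := measurable_kernelAverage hq₂meas hg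
  have hgZ : Integrable (fun ω => g (Z ω)) μ :=
    .of_bound (hg.comp hZ).aestronglyMeasurable C (ae_of_all _ fun ω => hgC (Z ω))
  have havgY : Integrable (fun ω => kernelAverage q₂ g (Y ω)) μ :=
    .of_bound (havg.comp hY).aestronglyMeasurable C
      (ae_of_all _ fun ω => abs_kernelAverage_le (hq₂nonneg _) (hrpos _) hgC)
  have hsets : ∀ A, MeasurableSet A → ∫ ω in (fun ω => (X ω, Y ω)) ⁻¹' A, g (Z ω) ∂μ
      = ∫ ω in (fun ω => (X ω, Y ω)) ⁻¹' A, kernelAverage q₂ g (Y ω) ∂μ := fun A hA =>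
    setIntegral_preimage_eq_setIntegral_kernelAverage (hX.prodMk (hY.prodMk hZ)).aemeasurable
      hq₁meas hq₂meas hq₂nonneg hrpos hlaw hg hgC hA
  have hcondXY : μ[(fun ω => g (Z ω)) | MeasurableSpace.comap (fun ω => (X ω, Y ω)) inferInstance]
      =ᵐ[μ] fun ω => kernelAverage q₂ g (Y ω) :=
    condExp_comap_ae_eq_of_forall_setIntegral_eq (hX.prodMk hY) hgZ
      (havg.comp measurable_snd).stronglyMeasurable havgY hsets
  have hcondY : μ[(fun ω => g (Z ω)) | MeasurableSpace.comap Y inferInstance]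
      =ᵐ[μ] fun ω => kernelAverage q₂ g (Y ω) :=
    condExp_comap_ae_eq_of_forall_setIntegral_eq hY hgZ havg.stronglyMeasurable havgY
      fun B hB => by
        simpa [Set.mk_preimage_prod] using hsets _ (MeasurableSet.univ.prod hB)
  exact ⟨hcondXY, hcondXY.trans hcondY.symm⟩

/-- Density-level Markov property: if the joint law of `(X, Y, Z)` has Lebesgue density of the
product form `q₁(x, y) q₂(y, z)`, with `q₂ > 0` and `0 < ∫ q₂(y, z) dz < ∞` for every `y`, then
for every bounded measurable `g` the conditional expectation of `g(Z)` given `σ(X, Y)` equals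
`ω ↦ (∫ g(z) q₂(Y ω, z) dz) / ∫ q₂(Y ω, z) dz` a.s.; in particular
`E[g(Z) | σ(X, Y)] = E[g(Z) | σ(Y)]` a.s. -/
theorem markov_conditional_expectation
    {Ω : Type*} [MeasurableSpace Ω] (μ : Measure Ω) [IsProbabilityMeasure μ]
    (a b c : ℕ)
    (X : Ω → (Fin a → ℝ)) (Y : Ω → (Fin b → ℝ)) (Z : Ω → (Fin c → ℝ))
    (hX : Measurable X) (hY : Measurable Y) (hZ : Measurable Z)
    (q₁ : (Fin a → ℝ) → (Fin b → ℝ) → ℝ) (q₂ : (Fin b → ℝ) → (Fin c → ℝ) → ℝ)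
    (hq₁meas : Measurable fun p : (Fin a → ℝ) × (Fin b → ℝ) => q₁ p.1 p.2)
    (hq₂meas : Measurable fun p : (Fin b → ℝ) × (Fin c → ℝ) => q₂ p.1 p.2)
    (hq₁nonneg : ∀ x y, 0 ≤ q₁ x y)
    (hq₂pos : ∀ y z, 0 < q₂ y z)
    (hq₂int : ∀ y, Integrable (q₂ y))
    (hrpos : ∀ y, 0 < ∫ z, q₂ y z)
    (hlaw : Measure.map (fun ω => (X ω, Y ω, Z ω)) μ
      = volume.withDensity fun w => ENNReal.ofReal (q₁ w.1 w.2.1 * q₂ w.2.1 w.2.2))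
    (g : (Fin c → ℝ) → ℝ) (hg : Measurable g) (hgb : ∃ C, ∀ z, |g z| ≤ C) :
    (μ[(fun ω => g (Z ω)) | MeasurableSpace.comap (fun ω => (X ω, Y ω)) inferInstance]
        =ᵐ[μ] fun ω => (∫ z, g z * q₂ (Y ω) z) / ∫ z, q₂ (Y ω) z)
      ∧ μ[(fun ω => g (Z ω)) | MeasurableSpace.comap (fun ω => (X ω, Y ω)) inferInstance]
        =ᵐ[μ] μ[(fun ω => g (Z ω)) | MeasurableSpace.comap Y inferInstance] :=
  markov_conditional_expectation_general μ a b c X Y Z hX hY hZ q₁ q₂ hq₁meas hq₂meas hq₂pos hrpos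
    hlaw g hg hgb
end

section
/- Let (Ω, F, μ) be a probability space, let a, b, c be natural numbers, and let X: Ω → ℝ^a, Y: Ω → ℝ^b, Z: Ω → ℝ^c be measurable maps. Suppose the law of the triple (X, Y, Z) on ℝ^a × ℝ^b × ℝ^c is absolutely continuous with respect to Lebesgue measure with density of the product (Markov) form p(x, y, z) = q₁(x, y) · q₂(y, z), where q₁: ℝ^a × ℝ^b → (0, ∞) and q₂: ℝ^b × ℝ^c → (0, ∞) are measurable and strictly positive, and suppose that for all x ∈ ℝ^a, z ∈ ℝ^c the normalizing integral N(x, z) := ∫_{ℝ^b} q₁(x, y) q₂(y, z) dy satisfies 0 < N(x, z) < ∞. Then for every bounded measurable g: ℝ^b → ℝ, the conditional expectation of g(Y) given the σ-algebra generated by (X, Z) is μ-almost surely equal to the function ω ↦ (∫_{ℝ^b} g(y) q₁(X(ω), y) q₂(y, Z(ω)) dy) / N(X(ω), Z(ω)). That is, the conditional density of the intermediate value Y given the endpoint values X = x and Z = z is y ↦ q₁(x, y) q₂(y, z) / ∫ q₁(x, y′) q₂(y′, z) dy′. -/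
/-!
Transfer `𝔼[h(X, Z) g(Y)]` to the joint density `p` and integrate the middle variable innermost
(Fubini). For fixed endpoints `(x, z)` the inner integral `∫ p(x, y, z) g(y) dy` is
`N(x, z) · m(x, z)`, where `m` is the mean of `g` under the normalized bridge density; this is
also the inner integral obtained from `h(X, Z) m(X, Z)`. Taking `h` an indicator shows that
`m(X, Z)` has the defining set integrals of the conditional expectation.
-/

open MeasureTheory

section
variable {α β γ E : Type*} [MeasurableSpace α] [MeasurableSpace β] [MeasurableSpace γ]
  [NormedAddCommGroup E] [NormedSpace ℝ E] {μα : Measure α} {μβ : Measure β} {μγ : Measure γ}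
  [SFinite μα] [SFinite μβ] [SFinite μγ]

theorem integral_prod_prod_eq_integral_integral_mid {f : α × β × γ → E}
    (hf : Integrable f (μα.prod (μβ.prod μγ))) :
    ∫ w, f w ∂μα.prod (μβ.prod μγ) = ∫ t, ∫ y, f (t.1, y, t.2) ∂μβ ∂μα.prod μγ := by
  have he : MeasurePreserving
      (MeasurableEquiv.prodAssoc.trans (MeasurableEquiv.prodCongr (.refl α) .prodComm))
      ((μα.prod μγ).prod μβ) (μα.prod (μβ.prod μγ)) :=
    (measurePreserving_prodAssoc μα μγ μβ).trans
      ((MeasurePreserving.id μα).prod Measure.measurePreserving_swap)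
  rw [← he.integral_comp', integral_prod]
  · rfl
  · exact (he.integrable_comp_emb (MeasurableEquiv.measurableEmbedding _)).2 hf
end

section
variable {Ω δ : Type*} [MeasurableSpace Ω] [MeasurableSpace δ] {μ : Measure Ω} {ν : Measure δ}
  {T : Ω → δ} {p : δ → ℝ}

theorem integral_comp_eq_integral_mul_of_map_eq_withDensity (hT : AEMeasurable T μ)
    (hp : AEMeasurable p ν) (hp0 : 0 ≤ᵐ[ν] p)
    (hlaw : μ.map T = ν.withDensity fun w => ENNReal.ofReal (p w)) {Φ : δ → ℝ}
    (hΦ : AEStronglyMeasurable Φ (μ.map T)) :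
    ∫ ω, Φ (T ω) ∂μ = ∫ w, p w * Φ w ∂ν := by
  rw [← integral_map hT hΦ, hlaw, integral_withDensity_eq_integral_toReal_smul₀ hp.ennreal_ofReal
    (.of_forall fun _ => ENNReal.ofReal_lt_top)]
  refine integral_congr_ae ?_
  filter_upwards [hp0] with w hw
  simp [ENNReal.toReal_ofReal hw]

theorem integrable_of_map_eq_withDensity [IsFiniteMeasure μ]
    (hp : AEMeasurable p ν) (hp0 : 0 ≤ᵐ[ν] p)
    (hlaw : μ.map T = ν.withDensity fun w => ENNReal.ofReal (p w)) : Integrable p ν := by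
  refine ⟨hp.aestronglyMeasurable, (hasFiniteIntegral_iff_ofReal hp0).2 ?_⟩
  rw [← setLIntegral_univ, ← withDensity_apply _ MeasurableSet.univ, ← hlaw]
  exact measure_lt_top _ _
end

section
variable {α β γ : Type*} [MeasureSpace β]

noncomputable def bridgeMean (p : α × β × γ → ℝ) (g : β → ℝ) (t : α × γ) : ℝ :=
  (∫ y, g y * p (t.1, y, t.2)) / ∫ y, p (t.1, y, t.2)

variable {p : α × β × γ → ℝ} {g : β → ℝ}

theorem measurable_bridgeMean [MeasurableSpace α] [MeasurableSpace γ]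
    [SFinite (volume : Measure β)] (hp : Measurable p) (hg : Measurable g) :
    Measurable (bridgeMean p g) := by
  have hint (f : β → ℝ) (hf : Measurable f) :
      Measurable fun t : α × γ => ∫ y, f y * p (t.1, y, t.2) :=
    (StronglyMeasurable.integral_prod_right'
      (f := fun r : (α × γ) × β => f r.2 * p (r.1.1, r.2, r.1.2))
      (by fun_prop)).measurable
  exact (hint g hg).div (by simpa only [one_mul] using hint (fun _ => 1) measurable_const)

theorem abs_bridgeMean_le {t : α × γ} (hp0 : ∀ y, 0 ≤ p (t.1, y, t.2))
    (hN : 0 < ∫ y, p (t.1, y, t.2)) {C : ℝ} (hC : ∀ y, |g y| ≤ C) : |bridgeMean p g t| ≤ C := by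
  have hpint : Integrable fun y => p (t.1, y, t.2) := .of_integral_ne_zero hN.ne'
  rw [bridgeMean, abs_div, abs_of_pos hN, div_le_iff₀ hN, ← integral_const_mul]
  refine norm_integral_le_of_norm_le (f := fun y => g y * p (t.1, y, t.2)) (hpint.const_mul C)
    (.of_forall fun y => ?_)
  rw [Real.norm_eq_abs, abs_mul, abs_of_nonneg (hp0 y)]
  exact mul_le_mul_of_nonneg_right (hC y) (hp0 y)

theorem integral_mul_bridgeMean {t : α × γ} (hN : ∫ y, p (t.1, y, t.2) ≠ 0) :
    ∫ y, p (t.1, y, t.2) * bridgeMean p g t = ∫ y, g y * p (t.1, y, t.2) := by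
  rw [integral_mul_const, bridgeMean, mul_div_cancel₀ _ hN]
end

section
variable {Ω α β γ : Type*} [MeasurableSpace Ω] [MeasureSpace α] [MeasureSpace β] [MeasureSpace γ]
  [SFinite (volume : Measure α)] [SFinite (volume : Measure β)] [SFinite (volume : Measure γ)]
  {μ : Measure Ω} [IsFiniteMeasure μ] {X : Ω → α} {Y : Ω → β} {Z : Ω → γ} {p : α × β × γ → ℝ}

theorem integral_comp_eq_integral_integral_mul_density (hX : Measurable X) (hY : Measurable Y)
    (hZ : Measurable Z) (hp : Measurable p) (hp0 : ∀ w, 0 ≤ p w)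
    (hlaw : μ.map (fun ω => (X ω, Y ω, Z ω)) = volume.withDensity fun w => ENNReal.ofReal (p w))
    {Φ : α × β × γ → ℝ} (hΦ : Measurable Φ) {K : ℝ} (hK : ∀ w, |Φ w| ≤ K) :
    ∫ ω, Φ (X ω, Y ω, Z ω) ∂μ = ∫ t : α × γ, ∫ y, p (t.1, y, t.2) * Φ (t.1, y, t.2) := by
  have hpint : Integrable p :=
    integrable_of_map_eq_withDensity hp.aemeasurable (.of_forall hp0) hlaw
  rw [integral_comp_eq_integral_mul_of_map_eq_withDensity
      (hX.prodMk (hY.prodMk hZ)).aemeasurable hp.aemeasurable (.of_forall hp0) hlaw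
      hΦ.aestronglyMeasurable,
    Measure.volume_eq_prod, Measure.volume_eq_prod,
    integral_prod_prod_eq_integral_integral_mid
      (hpint.mul_bdd hΦ.aestronglyMeasurable (.of_forall hK))]
  rfl

variable {g : β → ℝ} {C : ℝ}

theorem integral_mul_comp_eq_integral_mul_bridgeMean (hX : Measurable X) (hY : Measurable Y)
    (hZ : Measurable Z) (hp : Measurable p) (hp0 : ∀ w, 0 ≤ p w)
    (hN : ∀ x z, 0 < ∫ y, p (x, y, z))
    (hlaw : μ.map (fun ω => (X ω, Y ω, Z ω)) = volume.withDensity fun w => ENNReal.ofReal (p w))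
    (hg : Measurable g) (hC : ∀ y, |g y| ≤ C) {h : α × γ → ℝ} (hh : Measurable h) {D : ℝ}
    (hD : ∀ t, |h t| ≤ D) :
    ∫ ω, h (X ω, Z ω) * g (Y ω) ∂μ = ∫ ω, h (X ω, Z ω) * bridgeMean p g (X ω, Z ω) ∂μ := by
  have hbound {k : α × β × γ → ℝ} (hk : ∀ w, |k w| ≤ C) (w : α × β × γ) :
      |h (w.1, w.2.2) * k w| ≤ D * C := by
    rw [abs_mul]
    exact mul_le_mul (hD _) (hk w) (abs_nonneg _) ((abs_nonneg (h (w.1, w.2.2))).trans (hD _))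
  have hm : Measurable (bridgeMean p g) := measurable_bridgeMean hp hg
  calc ∫ ω, h (X ω, Z ω) * g (Y ω) ∂μ
      = ∫ t, ∫ y, p (t.1, y, t.2) * (h t * g y) :=
        integral_comp_eq_integral_integral_mul_density hX hY hZ hp hp0 hlaw
          (Φ := fun w => h (w.1, w.2.2) * g w.2.1) (by fun_prop) (hbound fun w => hC w.2.1)
    _ = ∫ t, ∫ y, p (t.1, y, t.2) * (h t * bridgeMean p g t) := by
        congr 1 with t
        have hgN : ∫ y, p (t.1, y, t.2) * (h t * g y) = h t * ∫ y, g y * p (t.1, y, t.2) := by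
          rw [← integral_const_mul]
          congr 1 with y
          ring
        rw [hgN, ← integral_mul_bridgeMean (hN t.1 t.2).ne', ← integral_const_mul]
        congr 1 with y
        ring
    _ = ∫ ω, h (X ω, Z ω) * bridgeMean p g (X ω, Z ω) ∂μ :=
        (integral_comp_eq_integral_integral_mul_density hX hY hZ hp hp0 hlaw
          (Φ := fun w => h (w.1, w.2.2) * bridgeMean p g (w.1, w.2.2)) (by fun_prop)
          (hbound fun w => abs_bridgeMean_le (fun _ => hp0 _) (hN _ _) hC)).symm

theorem condExp_comp_ae_eq_bridgeMean (hX : Measurable X) (hY : Measurable Y)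
    (hZ : Measurable Z) (hp : Measurable p) (hp0 : ∀ w, 0 ≤ p w)
    (hN : ∀ x z, 0 < ∫ y, p (x, y, z))
    (hlaw : μ.map (fun ω => (X ω, Y ω, Z ω)) = volume.withDensity fun w => ENNReal.ofReal (p w))
    (hg : Measurable g) (hC : ∀ y, |g y| ≤ C) :
    μ[fun ω => g (Y ω) | MeasurableSpace.comap (fun ω => (X ω, Z ω)) inferInstance]
      =ᵐ[μ] fun ω => bridgeMean p g (X ω, Z ω) := by
  have hXZ : Measurable fun ω => (X ω, Z ω) := hX.prodMk hZ
  have hm : Measurable (bridgeMean p g) := measurable_bridgeMean hp hg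
  have hmC (t : α × γ) : |bridgeMean p g t| ≤ C := abs_bridgeMean_le (fun _ => hp0 _) (hN _ _) hC
  have hbdd {f : Ω → ℝ} (hf : Measurable f) (hfC : ∀ ω, |f ω| ≤ C) : Integrable f μ :=
    (integrable_const C).mono' hf.aestronglyMeasurable (.of_forall hfC)
  refine (ae_eq_condExp_of_forall_setIntegral_eq hXZ.comap_le
    (hbdd (hg.comp hY) fun ω => hC (Y ω))
    (fun s _ _ => (hbdd (hm.comp hXZ) fun ω => hmC _).integrableOn) ?_
    (hm.comp (Measurable.of_comap_le le_rfl)).aestronglyMeasurable).symm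
  rintro _ ⟨A, hA, rfl⟩ -
  have hind (f : Ω → ℝ) : ∫ ω in (fun ω => (X ω, Z ω)) ⁻¹' A, f ω ∂μ
      = ∫ ω, A.indicator 1 (X ω, Z ω) * f ω ∂μ := by
    rw [← integral_indicator (hXZ hA)]
    congr 1 with ω
    by_cases h : (X ω, Z ω) ∈ A <;> simp [h]
  rw [hind, hind]
  refine (integral_mul_comp_eq_integral_mul_bridgeMean hX hY hZ hp hp0 hN hlaw hg hC
    (measurable_one.indicator hA) (D := 1) fun t => ?_).symm
  by_cases h : t ∈ A <;> simp [h]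
end

theorem bridge_conditional_expectation_general
    {Ω : Type*} [MeasurableSpace Ω] (μ : Measure Ω) [IsProbabilityMeasure μ]
    (a b c : ℕ)
    (X : Ω → (Fin a → ℝ)) (Y : Ω → (Fin b → ℝ)) (Z : Ω → (Fin c → ℝ))
    (hX : Measurable X) (hY : Measurable Y) (hZ : Measurable Z)
    (q₁ : (Fin a → ℝ) → (Fin b → ℝ) → ℝ) (q₂ : (Fin b → ℝ) → (Fin c → ℝ) → ℝ)
    (hq₁meas : Measurable fun p : (Fin a → ℝ) × (Fin b → ℝ) => q₁ p.1 p.2)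
    (hq₂meas : Measurable fun p : (Fin b → ℝ) × (Fin c → ℝ) => q₂ p.1 p.2)
    (hq₁pos : ∀ x y, 0 < q₁ x y)
    (hq₂pos : ∀ y z, 0 < q₂ y z)
    (hNpos : ∀ x z, 0 < ∫ y, q₁ x y * q₂ y z)
    (hlaw : Measure.map (fun ω => (X ω, Y ω, Z ω)) μ
      = volume.withDensity fun w => ENNReal.ofReal (q₁ w.1 w.2.1 * q₂ w.2.1 w.2.2))
    (g : (Fin b → ℝ) → ℝ) (hg : Measurable g) (hgb : ∃ C, ∀ y, |g y| ≤ C) :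
    μ[(fun ω => g (Y ω)) | MeasurableSpace.comap (fun ω => (X ω, Z ω)) inferInstance]
      =ᵐ[μ] fun ω =>
        (∫ y, g y * (q₁ (X ω) y * q₂ y (Z ω))) / ∫ y, q₁ (X ω) y * q₂ y (Z ω) := by
  obtain ⟨C, hC⟩ := hgb
  have hp : Measurable fun w : (Fin a → ℝ) × (Fin b → ℝ) × (Fin c → ℝ) =>
      q₁ w.1 w.2.1 * q₂ w.2.1 w.2.2 :=
    (hq₁meas.comp (measurable_fst.prodMk measurable_snd.fst)).mul (hq₂meas.comp measurable_snd)
  exact condExp_comp_ae_eq_bridgeMean hX hY hZ hp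
    (fun w => (mul_pos (hq₁pos _ _) (hq₂pos _ _)).le) hNpos hlaw hg hC

/-- Bridge-density formula: if the joint law of `(X, Y, Z)` has Lebesgue density of the product
(Markov) form `q₁(x, y) q₂(y, z)` with `q₁, q₂ > 0` and normalizing integral
`N(x, z) = ∫ q₁(x, y) q₂(y, z) dy` satisfying `0 < N(x, z) < ∞`, then for every bounded
measurable `g` the conditional expectation of `g(Y)` given `σ(X, Z)` equals
`ω ↦ (∫ g(y) q₁(X ω, y) q₂(y, Z ω) dy) / N(X ω, Z ω)` a.s.; i.e. the conditional density of
the intermediate value `Y` given the endpoints `X = x`, `Z = z` is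
`y ↦ q₁(x, y) q₂(y, z) / ∫ q₁(x, y′) q₂(y′, z) dy′`. -/
theorem bridge_conditional_expectation
    {Ω : Type*} [MeasurableSpace Ω] (μ : Measure Ω) [IsProbabilityMeasure μ]
    (a b c : ℕ)
    (X : Ω → (Fin a → ℝ)) (Y : Ω → (Fin b → ℝ)) (Z : Ω → (Fin c → ℝ))
    (hX : Measurable X) (hY : Measurable Y) (hZ : Measurable Z)
    (q₁ : (Fin a → ℝ) → (Fin b → ℝ) → ℝ) (q₂ : (Fin b → ℝ) → (Fin c → ℝ) → ℝ)
    (hq₁meas : Measurable fun p : (Fin a → ℝ) × (Fin b → ℝ) => q₁ p.1 p.2)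
    (hq₂meas : Measurable fun p : (Fin b → ℝ) × (Fin c → ℝ) => q₂ p.1 p.2)
    (hq₁pos : ∀ x y, 0 < q₁ x y)
    (hq₂pos : ∀ y z, 0 < q₂ y z)
    (hNint : ∀ x z, Integrable fun y => q₁ x y * q₂ y z)
    (hNpos : ∀ x z, 0 < ∫ y, q₁ x y * q₂ y z)
    (hlaw : Measure.map (fun ω => (X ω, Y ω, Z ω)) μ
      = volume.withDensity fun w => ENNReal.ofReal (q₁ w.1 w.2.1 * q₂ w.2.1 w.2.2))
    (g : (Fin b → ℝ) → ℝ) (hg : Measurable g) (hgb : ∃ C, ∀ y, |g y| ≤ C) :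
    μ[(fun ω => g (Y ω)) | MeasurableSpace.comap (fun ω => (X ω, Z ω)) inferInstance]
      =ᵐ[μ] fun ω =>
        (∫ y, g y * (q₁ (X ω) y * q₂ y (Z ω))) / ∫ y, q₁ (X ω) y * q₂ y (Z ω) :=
  bridge_conditional_expectation_general μ a b c X Y Z hX hY hZ q₁ q₂ hq₁meas hq₂meas hq₁pos hq₂pos
    hNpos hlaw g hg hgb
end
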